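/- For every family F of strictly increasing functions in ω^ω with |F| < 𝔡 there exists a strictly increasing g ∈ ω^ω such that either for every f ∈ F there are infinitely many n for which some m satisfies g(2n) < f(m) < f(m+1) < g(2n+1), or for every f ∈ F there are infinitely many n for which some m satisfies g(2n+1) < f(m) < f(m+1) < g(2n+2). -/

import Mathlib

open Set Filter Cardinal

/-- The dominating number 𝔡. -/
noncomputable def frakD : Cardinal :=
  sInf {c : Cardinal | ∃ F : Set (ℕ → ℕ),
    (∀ g : ℕ → ℕ, ∃ f ∈ F, ∀ᶠ n in atTop, g n ≤ f n) ∧ c = #F}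

/-!
Since `|F| < 𝔡`, some `k` is frequently above `n ↦ f (n + 6)` for every `f ∈ F`. Iterating
`a ↦ a + 2 + ∑_{i < a} k i` from `0` gives a sequence `s` such that `k n ≤ s (t + 1)` whenever
`n < s t`, and we take the gaps `(s t, s (t + 1) - 1)`. If `s t ≤ n < s (t + 1)` and
`f (n + 6) < k n`, the six values `f (n + 1) < ⋯ < f (n + 6)` lie in `(s t, s (t + 2))`, and the
two short gaps `[s (t + 1) - 1, s (t + 1)]` and `[s (t + 2) - 1, s (t + 2)]` cannot absorb
enough of them to keep two consecutive values out of both `(s t, s (t + 1) - 1)` and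
`(s (t + 1), s (t + 2) - 1)`.
-/

theorem exists_frequently_lt_of_mk_lt_frakD {F : Set (ℕ → ℕ)} (hF : #F < frakD) :
    ∃ k : ℕ → ℕ, ∀ f ∈ F, ∃ᶠ n in atTop, f n < k n := by
  by_contra! h
  exact hF.not_ge (csInf_le' ⟨F, h, rfl⟩)

def HasConsecutiveValuesBetween (f : ℕ → ℕ) (a b : ℕ) : Prop :=
  ∃ m, a < f m ∧ f m < f (m + 1) ∧ f (m + 1) < b

theorem hasConsecutiveValuesBetween_or {f : ℕ → ℕ} (hf : StrictMono f) {a b c m : ℕ}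
    (ha : a < f m) (hc : f (m + 5) < c) :
    HasConsecutiveValuesBetween f a (b - 1) ∨ HasConsecutiveValuesBetween f b (c - 1) := by
  have h₁ : f m < f (m + 1) := hf (by omega)
  have h₂ : f (m + 1) < f (m + 2) := hf (by omega)
  have h₃ : f (m + 2) < f (m + 3) := hf (by omega)
  have h₄ : f (m + 3) < f (m + 4) := hf (by omega)
  have h₅ : f (m + 4) < f (m + 5) := hf (by omega)
  by_cases hb : f (m + 1) < b - 1
  · exact Or.inl ⟨m, ha, h₁, hb⟩
  · exact Or.inr ⟨m + 3, by omega, h₄, show f (m + 4) < c - 1 by omega⟩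

def fastSeq (k : ℕ → ℕ) : ℕ → ℕ
  | 0 => 0
  | t + 1 => fastSeq k t + 2 + ∑ i ∈ Finset.range (fastSeq k t), k i

section fastSeq

variable (k : ℕ → ℕ)

theorem fastSeq_add_two_le (t : ℕ) : fastSeq k t + 2 ≤ fastSeq k (t + 1) :=
  Nat.le_add_right _ _

theorem fastSeq_strictMono : StrictMono (fastSeq k) :=
  strictMono_nat_of_lt_succ fun t => by have := fastSeq_add_two_le k t; omega

theorem le_fastSeq_succ {n t : ℕ} (hn : n < fastSeq k t) : k n ≤ fastSeq k (t + 1) := calc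
  k n ≤ ∑ i ∈ Finset.range (fastSeq k t), k i :=
    Finset.single_le_sum (fun _ _ => Nat.zero_le _) (Finset.mem_range.2 hn)
  _ ≤ fastSeq k (t + 1) := Nat.le_add_left _ _

theorem exists_fastSeq_le_lt (n : ℕ) : ∃ t, fastSeq k t ≤ n ∧ n < fastSeq k (t + 1) := by
  obtain ⟨t, h₁, h₂⟩ := (fastSeq_strictMono k).exists_between_of_tendsto_atTop
    (fastSeq_strictMono k).tendsto_atTop (x := n + 1) (by simp [fastSeq])
  exact ⟨t, by omega, by omega⟩

end fastSeq

def gapFun (s : ℕ → ℕ) (j : ℕ) : ℕ := s ((j + 1) / 2) - j % 2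

section gapFun

variable (s : ℕ → ℕ)

@[simp] theorem gapFun_two_mul (t : ℕ) : gapFun s (2 * t) = s t := by
  simp [gapFun, show (2 * t + 1) / 2 = t by omega]

@[simp] theorem gapFun_two_mul_add_one (t : ℕ) : gapFun s (2 * t + 1) = s (t + 1) - 1 := by
  simp [gapFun, show (2 * t + 1 + 1) / 2 = t + 1 by omega, Nat.add_mod]

theorem gapFun_strictMono (hs : ∀ t, s t + 2 ≤ s (t + 1)) : StrictMono (gapFun s) := by
  refine strictMono_nat_of_lt_succ fun j => ?_
  obtain ⟨t, rfl | rfl⟩ := Nat.even_or_odd' j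
  · simpa using (by have := hs t; omega : s t < s (t + 1) - 1)
  · rw [gapFun_two_mul_add_one, show 2 * t + 1 + 1 = 2 * (t + 1) by ring, gapFun_two_mul]
    have := hs t
    omega

end gapFun

theorem infinite_hasConsecutiveValuesBetween_gapFun_fastSeq {f k : ℕ → ℕ} (hf : StrictMono f)
    (hk : ∃ᶠ n in atTop, f (n + 6) < k n) :
    {t | HasConsecutiveValuesBetween f (gapFun (fastSeq k) (2 * t))
      (gapFun (fastSeq k) (2 * t + 1))}.Infinite := by
  refine Set.infinite_of_forall_exists_gt fun N => ?_
  obtain ⟨n, hNn, hfk⟩ := Filter.frequently_atTop.1 hk (fastSeq k (N + 1))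
  obtain ⟨t, hnt, htn⟩ := exists_fastSeq_le_lt k n
  have hNt : N + 1 < t + 1 := (fastSeq_strictMono k).lt_iff_lt.1 (by omega)
  have hlow : fastSeq k t < f (n + 1) := by have := hf.le_apply (x := n + 1); omega
  have hup : f (n + 1 + 5) < fastSeq k (t + 1 + 1) := hfk.trans_le (le_fastSeq_succ k htn)
  rcases hasConsecutiveValuesBetween_or hf hlow hup with h | h
  · exact ⟨t, by simpa using h, by omega⟩
  · exact ⟨t + 1, by simpa [mul_add] using h, by omega⟩

theorem exists_gap_function (F : Set (ℕ → ℕ)) (hF : ∀ f ∈ F, StrictMono f)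
    (hcard : #F < frakD) :
    ∃ g : ℕ → ℕ, StrictMono g ∧
      ((∀ f ∈ F, {n : ℕ | ∃ m, g (2*n) < f m ∧ f m < f (m+1) ∧ f (m+1) < g (2*n+1)}.Infinite) ∨
       (∀ f ∈ F, {n : ℕ | ∃ m, g (2*n+1) < f m ∧ f m < f (m+1) ∧ f (m+1) < g (2*n+2)}.Infinite)) := by
  obtain ⟨k, hk⟩ := exists_frequently_lt_of_mk_lt_frakD
    (mk_image_le.trans_lt hcard : #((fun f n => f (n + 6)) '' F) < frakD)
  refine ⟨gapFun (fastSeq k), gapFun_strictMono _ (fastSeq_add_two_le k), Or.inl fun f hf => ?_⟩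
  exact infinite_hasConsecutiveValuesBetween_gapFun_fastSeq (hF f hf) (hk _ (mem_image_of_mem _ hf))
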